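/- Fix γ > 0, B > 0, δ > 0 and a sign ε ∈ {+1, −1}. For each integer N ≥ 1 and each r ≠ 0 there is a unique x ∈ (−N^δ, N^δ) with x·r > 0 satisfying (2√(x² + B²/4) + εB)·x / √(1 − x²·N^{−2δ}) = π·N^{2δ−1}/(γ r); denote it x_{N,B,ε}(r). Then: (i) if δ > 1/2, lim_{N→∞} N^{1/2−δ}·x_{N,B,ε}(r) = sign(r)·√(π/(2γ))·|r|^{−1/2} for both signs ε; (ii) if δ = 1/2, lim_{N→∞} x_{N,B,ε}(r) = x_{B,ε}(r), where x_{B,ε}(r) is the unique real solution of (2√(x² + B²/4) + εB)·x = π/(γ r); (iii) if 0 < δ < 1/2, lim_{N→∞} N^{(1−2δ)/3}·x_{N,B,−}(r) = sign(r)·(π/(2γ))^{1/3}·B^{1/3}·|r|^{−1/3}. -/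

import Mathlib

/-!
Put `g(x) = (2√(x² + B²/4) + εB)·x`. Both `g` and `x ↦ g(x)/√(1 - c x²)` are strictly increasing:
each is an increasing odd-signed factor times a factor that grows with `|x|`. This gives
uniqueness of `x_{N,B,ε}(r)`.

For the limits, rescale `x = t·N^(-b)`. With the right `b`, `N^(1-2δ)·g(t·N^(-b))` converges to a
strictly increasing `φ(t)` while the square-root factor tends to `1`: by the homogeneity
`g_{cB}(cx) = c² g_B(x)` one gets `φ(t) = 2|t|t` for `δ > 1/2`; `φ = g` for `δ = 1/2`; and for
`ε = -1`, `δ < 1/2` the identity `g(x) = 4x³/(2√(x² + B²/4) + B)` gives `φ(t) = 2t³/B`. The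
rescaled solutions `u_N` satisfy `f_N(u_N) = π/(γr) = φ(L)` for increasing `f_N → φ` pointwise,
and monotonicity squeezes `u_N → L`.
-/

open Filter Topology

/-- `profile B ε` is the left-hand side of the equation defining `x_{B,ε}`; `relProfile B ε c`
with `c = N^(-2δ)` is that of the equation defining `x_{N,B,ε}`. -/
noncomputable def profile (B ε x : ℝ) : ℝ := (2 * √(x ^ 2 + B ^ 2 / 4) + ε * B) * x

noncomputable def relProfile (B ε c x : ℝ) : ℝ := profile B ε x / √(1 - x ^ 2 * c)

theorem strictMonoOn_mul_of_abs_le {g w : ℝ → ℝ} {s : Set ℝ} (hg : StrictMono g) (hg0 : g 0 = 0)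
    (hw : ∀ x ∈ s, x ≠ 0 → 0 < w x) (hw_abs : ∀ x ∈ s, ∀ y ∈ s, |x| ≤ |y| → w x ≤ w y) :
    StrictMonoOn (fun x => g x * w x) s := by
  intro a ha b hb hab
  rcases le_or_gt 0 a with ha0 | ha0
  · have hb0 : 0 < b := ha0.trans_lt hab
    calc g a * w a ≤ g a * w b :=
          mul_le_mul_of_nonneg_left (hw_abs a ha b hb (abs_le_abs_of_nonneg ha0 hab.le))
            (hg0 ▸ hg.monotone ha0)
      _ < g b * w b := mul_lt_mul_of_pos_right (hg hab) (hw b hb hb0.ne')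
  rcases le_or_gt b 0 with hb0 | hb0
  · calc g a * w a < g b * w a := mul_lt_mul_of_pos_right (hg hab) (hw a ha ha0.ne)
      _ ≤ g b * w b :=
          mul_le_mul_of_nonpos_left (hw_abs b hb a ha (abs_le_abs_of_nonpos hb0 hab.le))
            (hg0 ▸ hg.monotone hb0)
  · calc g a * w a < 0 := mul_neg_of_neg_of_pos (hg0 ▸ hg ha0) (hw a ha ha0.ne)
      _ < g b * w b := mul_pos (hg0 ▸ hg hb0) (hw b hb hb0.ne')

theorem half_lt_sqrt_sq_add {B x : ℝ} (hB : 0 ≤ B) (hx : x ≠ 0) :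
    B / 2 < √(x ^ 2 + B ^ 2 / 4) := by
  rw [Real.lt_sqrt (by positivity)]
  nlinarith [pow_pos (abs_pos.2 hx) 2, sq_abs x]

theorem profile_strictMono {B ε : ℝ} (hB : 0 ≤ B) (hε : |ε| ≤ 1) : StrictMono (profile B ε) := by
  have hεB : -B ≤ ε * B := by nlinarith [neg_abs_le ε]
  refine strictMonoOn_univ.1 ((strictMonoOn_mul_of_abs_le strictMono_id rfl
    (w := fun x => 2 * √(x ^ 2 + B ^ 2 / 4) + ε * B) (fun x _ hx => ?_) fun x _ y _ hxy => ?_).congr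
    fun x _ => mul_comm _ _)
  · linarith [half_lt_sqrt_sq_add hB hx]
  · have := Real.sqrt_le_sqrt (show x ^ 2 + B ^ 2 / 4 ≤ y ^ 2 + B ^ 2 / 4 by
      linarith [sq_le_sq.2 hxy])
    linarith

theorem sq_mul_lt_one_of_mem_Ioo {n δ x : ℝ} (hn : 0 < n) (hx : x ∈ Set.Ioo (-(n ^ δ)) (n ^ δ)) :
    x ^ 2 * n ^ (-(2 * δ)) < 1 := by
  have hpos : 0 < (n ^ δ) ^ 2 := by positivity
  rw [Real.rpow_neg hn.le, show 2 * δ = δ * (2 : ℕ) by push_cast; ring,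
    Real.rpow_mul_natCast hn.le, mul_inv_lt_iff₀ hpos, one_mul]
  exact sq_lt_sq' hx.1 hx.2

theorem relProfile_strictMonoOn {B ε c : ℝ} (hB : 0 ≤ B) (hε : |ε| ≤ 1) (hc : 0 ≤ c) :
    StrictMonoOn (relProfile B ε c) {x | x ^ 2 * c < 1} := by
  refine (strictMonoOn_mul_of_abs_le (profile_strictMono hB hε) (by simp [profile])
    (w := fun x => (√(1 - x ^ 2 * c))⁻¹) (fun x hx _ => ?_) fun x hx y hy hxy => ?_).congr
    fun x _ => (div_eq_mul_inv _ _).symm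
  · have : 0 < 1 - x ^ 2 * c := by simp only [Set.mem_ofPred_eq] at hx; linarith
    positivity
  · have : 0 < 1 - y ^ 2 * c := by simp only [Set.mem_ofPred_eq] at hy; linarith
    have hsq : x ^ 2 * c ≤ y ^ 2 * c := mul_le_mul_of_nonneg_right (sq_le_sq.2 hxy) hc
    gcongr

theorem relProfile_injOn_Ioo {B ε δ n : ℝ} (hB : 0 ≤ B) (hε : |ε| ≤ 1) (hn : 0 < n) :
    Set.InjOn (relProfile B ε (n ^ (-(2 * δ)))) (Set.Ioo (-(n ^ δ)) (n ^ δ)) :=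
  (relProfile_strictMonoOn hB hε (Real.rpow_nonneg hn.le _)).injOn.mono
    fun _ hx => sq_mul_lt_one_of_mem_Ioo hn hx

theorem tendsto_of_monotoneOn_of_apply_eq {ι α β : Type*} [LinearOrder α] [TopologicalSpace α]
    [OrderTopology α] [LinearOrder β] [TopologicalSpace β] [OrderClosedTopology β] {l : Filter ι}
    {f : ι → α → β} {D : ι → Set α} {φ : α → β} {u : ι → α} {a : α}
    (hφ : StrictMono φ) (hf : ∀ᶠ i in l, MonotoneOn (f i) (D i))
    (hD : ∀ x, ∀ᶠ i in l, x ∈ D i) (hu : ∀ᶠ i in l, u i ∈ D i)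
    (hlim : ∀ x, Tendsto (fun i => f i x) l (𝓝 (φ x))) (hfu : ∀ᶠ i in l, f i (u i) = φ a) :
    Tendsto u l (𝓝 a) := by
  refine tendsto_order.2 ⟨fun x hx => ?_, fun x hx => ?_⟩
  · filter_upwards [hf, hD x, hu, hfu, (hlim x).eventually_lt_const (hφ hx)]
      with i hfi hxi hui hfui hlt
    by_contra! hle
    exact (hfi hui hxi hle).not_gt (hfui ▸ hlt)
  · filter_upwards [hf, hD x, hu, hfu, (hlim x).eventually_const_lt (hφ hx)]
      with i hfi hxi hui hfui hlt
    by_contra! hle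
    exact (hfi hxi hui hle).not_gt (hfui ▸ hlt)

theorem rpow_mul_rpow_eq_one {n a b : ℝ} (hn : 0 < n) (h : a + b = 0) : n ^ a * n ^ b = 1 := by
  rw [← Real.rpow_add hn, h, Real.rpow_zero]

theorem tendsto_natCast_rpow_neg {a : ℝ} (ha : 0 < a) :
    Tendsto (fun N : ℕ => (N : ℝ) ^ (-a)) atTop (𝓝 0) :=
  (tendsto_rpow_neg_atTop ha).comp tendsto_natCast_atTop_atTop

theorem tendsto_sqrt_one_sub_sq_mul {b δ : ℝ} (hbδ : 0 < b + δ) (t : ℝ) :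
    Tendsto (fun N : ℕ => √(1 - (t * (N : ℝ) ^ (-b)) ^ 2 * (N : ℝ) ^ (-(2 * δ)))) atTop (𝓝 1) := by
  have h0 : Tendsto (fun N : ℕ => (t * (N : ℝ) ^ (-(b + δ))) ^ 2) atTop (𝓝 0) := by
    simpa using ((tendsto_natCast_rpow_neg hbδ).const_mul t).pow 2
  have h1 : Tendsto (fun N : ℕ => √(1 - (t * (N : ℝ) ^ (-(b + δ))) ^ 2)) atTop (𝓝 1) := by
    simpa only [sub_zero, Real.sqrt_one] using (h0.const_sub 1).sqrt
  refine h1.congr' ?_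
  filter_upwards [eventually_gt_atTop 0] with N hN
  have hn : (0 : ℝ) < N := Nat.cast_pos.2 hN
  rw [neg_add, Real.rpow_add hn, show -(2 * δ) = -δ * (2 : ℕ) by push_cast; ring,
    Real.rpow_mul_natCast hn.le]
  congr 2
  ring

theorem tendsto_rpow_mul_of_relProfile_eq {B ε δ b C L : ℝ} {φ : ℝ → ℝ} {x : ℕ → ℝ}
    (hB : 0 ≤ B) (hε : |ε| ≤ 1) (hbδ : 0 < b + δ) (hφ : StrictMono φ) (hL : φ L = C)
    (hlim : ∀ t, Tendsto (fun N : ℕ => (N : ℝ) ^ (1 - 2 * δ) * profile B ε (t * (N : ℝ) ^ (-b)))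
      atTop (𝓝 (φ t)))
    (hx : ∀ᶠ N : ℕ in atTop, x N ∈ Set.Ioo (-((N : ℝ) ^ δ)) ((N : ℝ) ^ δ) ∧
      relProfile B ε ((N : ℝ) ^ (-(2 * δ))) (x N) = C * (N : ℝ) ^ (2 * δ - 1)) :
    Tendsto (fun N : ℕ => (N : ℝ) ^ b * x N) atTop (𝓝 L) := by
  let S : ℕ → Set ℝ := fun N : ℕ => {y | y ^ 2 * (N : ℝ) ^ (-(2 * δ)) < 1}
  refine tendsto_of_monotoneOn_of_apply_eq (D := fun N : ℕ => (· * (N : ℝ) ^ (-b)) ⁻¹' S N)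
    (f := fun (N : ℕ) t => (N : ℝ) ^ (1 - 2 * δ) *
      relProfile B ε ((N : ℝ) ^ (-(2 * δ))) (t * (N : ℝ) ^ (-b))) hφ ?_ ?_ ?_ ?_ ?_
  · filter_upwards [eventually_gt_atTop 0] with N hN
    have hn : (0 : ℝ) < N := Nat.cast_pos.2 hN
    have hmono := (relProfile_strictMonoOn hB hε (Real.rpow_nonneg hn.le (-(2 * δ)))).comp
      ((strictMono_mul_right_of_pos (Real.rpow_pos_of_pos hn (-b))).strictMonoOn _)
      (Set.mapsTo_preimage _ _)
    exact fun s hs t ht hst =>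
      mul_le_mul_of_nonneg_left (hmono.monotoneOn hs ht hst) (Real.rpow_nonneg hn.le _)
  · intro t
    filter_upwards [(tendsto_sqrt_one_sub_sq_mul hbδ t).eventually_const_lt one_pos] with N hN
    exact sub_pos.1 (Real.sqrt_pos.1 hN)
  · filter_upwards [hx, eventually_gt_atTop 0] with N hxN hN
    have hn : (0 : ℝ) < N := Nat.cast_pos.2 hN
    show (N : ℝ) ^ b * x N * (N : ℝ) ^ (-b) ∈ S N
    rw [mul_right_comm, rpow_mul_rpow_eq_one hn (add_neg_cancel b), one_mul]
    exact sq_mul_lt_one_of_mem_Ioo hn hxN.1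
  · intro t
    have := (hlim t).div (tendsto_sqrt_one_sub_sq_mul hbδ t) one_ne_zero
    rw [div_one] at this
    exact this.congr fun N => mul_div_assoc _ _ _
  · filter_upwards [hx, eventually_gt_atTop 0] with N hxN hN
    have hn : (0 : ℝ) < N := Nat.cast_pos.2 hN
    rw [mul_right_comm, rpow_mul_rpow_eq_one hn (add_neg_cancel b), one_mul, hxN.2, hL,
      mul_left_comm, rpow_mul_rpow_eq_one hn (by ring), mul_one]

theorem profile_mul_mul {c : ℝ} (hc : 0 ≤ c) (B ε x : ℝ) :
    profile (c * B) ε (c * x) = c ^ 2 * profile B ε x := by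
  have hsqrt : √((c * x) ^ 2 + (c * B) ^ 2 / 4) = c * √(x ^ 2 + B ^ 2 / 4) := by
    rw [show (c * x) ^ 2 + (c * B) ^ 2 / 4 = c ^ 2 * (x ^ 2 + B ^ 2 / 4) by ring,
      Real.sqrt_mul (sq_nonneg c), Real.sqrt_sq hc]
  rw [profile, profile, hsqrt]
  ring

theorem profile_zero_left (ε x : ℝ) : profile 0 ε x = 2 * |x| * x := by
  simp [profile, Real.sqrt_sq_eq_abs]

theorem profile_neg_one_eq {B : ℝ} (hB : 0 < B) (x : ℝ) :
    profile B (-1) x = 4 * x ^ 3 / (2 * √(x ^ 2 + B ^ 2 / 4) + B) := by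
  have hs := Real.sq_sqrt (show 0 ≤ x ^ 2 + B ^ 2 / 4 by positivity)
  rw [eq_div_iff (by positivity), profile]
  linear_combination 4 * x * hs

theorem tendsto_rpow_mul_profile_of_half_lt {δ : ℝ} (hδ : 1 / 2 < δ) (B ε t : ℝ) :
    Tendsto (fun N : ℕ => (N : ℝ) ^ (1 - 2 * δ) * profile B ε (t * (N : ℝ) ^ (-(1 / 2 - δ))))
      atTop (𝓝 (profile 0 ε t)) := by
  have hB : Tendsto (fun N : ℕ => B * (N : ℝ) ^ (-(δ - 1 / 2))) atTop (𝓝 0) := by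
    simpa using (tendsto_natCast_rpow_neg (sub_pos.2 hδ)).const_mul B
  have hcont : Continuous (fun B' => profile B' ε t) := by unfold profile; fun_prop
  refine ((hcont.tendsto 0).comp hB).congr' ?_
  filter_upwards [eventually_gt_atTop 0] with N hN
  have hn : (0 : ℝ) < N := Nat.cast_pos.2 hN
  set m := (N : ℝ) ^ (-(1 / 2 - δ))
  have hm : m * (N : ℝ) ^ (-(δ - 1 / 2)) = 1 := rpow_mul_rpow_eq_one hn (by ring)
  have hm2 : (N : ℝ) ^ (1 - 2 * δ) * m ^ 2 = 1 := by
    rw [← Real.rpow_mul_natCast hn.le]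
    exact rpow_mul_rpow_eq_one hn (by push_cast; ring)
  calc profile (B * (N : ℝ) ^ (-(δ - 1 / 2))) ε t
      = (N : ℝ) ^ (1 - 2 * δ) * (m ^ 2 * profile (B * (N : ℝ) ^ (-(δ - 1 / 2))) ε t) := by
        rw [← mul_assoc, hm2, one_mul]
    _ = (N : ℝ) ^ (1 - 2 * δ) * profile B ε (t * m) := by
        rw [← profile_mul_mul (by positivity), ← mul_assoc, mul_comm m B, mul_assoc, hm, mul_one,
          mul_comm m t]

theorem tendsto_rpow_mul_profile_neg_one {B δ : ℝ} (hB : 0 < B) (hδ : δ < 1 / 2) (t : ℝ) :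
    Tendsto (fun N : ℕ =>
        (N : ℝ) ^ (1 - 2 * δ) * profile B (-1) (t * (N : ℝ) ^ (-((1 - 2 * δ) / 3))))
      atTop (𝓝 (2 * t ^ 3 / B)) := by
  have hy : Tendsto (fun N : ℕ => t * (N : ℝ) ^ (-((1 - 2 * δ) / 3))) atTop (𝓝 0) := by
    simpa using (tendsto_natCast_rpow_neg (by linarith : 0 < (1 - 2 * δ) / 3)).const_mul t
  have hden : Tendsto
      (fun N : ℕ => 2 * √((t * (N : ℝ) ^ (-((1 - 2 * δ) / 3))) ^ 2 + B ^ 2 / 4) + B)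
      atTop (𝓝 (2 * B)) := by
    have hB2 : √((0 : ℝ) ^ 2 + B ^ 2 / 4) = B / 2 := by
      rw [show (0 : ℝ) ^ 2 + B ^ 2 / 4 = (B / 2) ^ 2 by ring, Real.sqrt_sq (by positivity)]
    convert ((((hy.pow 2).add_const (B ^ 2 / 4)).sqrt).const_mul 2).add_const B using 2
    rw [hB2]
    ring
  rw [show 2 * t ^ 3 / B = 4 * t ^ 3 / (2 * B) by field_simp; ring]
  refine (tendsto_const_nhds.div hden (by positivity)).congr' ?_
  filter_upwards [eventually_gt_atTop 0] with N hN
  have hm3 : (N : ℝ) ^ (1 - 2 * δ) * ((N : ℝ) ^ (-((1 - 2 * δ) / 3))) ^ 3 = 1 := by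
    rw [← Real.rpow_mul_natCast (Nat.cast_pos.2 hN).le]
    exact rpow_mul_rpow_eq_one (Nat.cast_pos.2 hN) (by push_cast; ring)
  show 4 * t ^ 3 / _ = _
  rw [profile_neg_one_eq hB, ← mul_div_assoc]
  congr 1
  linear_combination (-4 * t ^ 3) * hm3

theorem strictMono_two_mul_pow_three_div {B : ℝ} (hB : 0 < B) :
    StrictMono fun t : ℝ => 2 * t ^ 3 / B := fun _ _ hst =>
  div_lt_div_of_pos_right
    (mul_lt_mul_of_pos_left (Odd.strictMono_pow (by decide : Odd 3) hst) two_pos) hB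

theorem Real.abs_sign_of_ne_zero {r : ℝ} (hr : r ≠ 0) : |Real.sign r| = 1 := by
  rcases Real.sign_apply_eq_of_ne_zero r hr with h | h <;> simp [h]

theorem Real.sign_mul_abs_inv {r : ℝ} (hr : r ≠ 0) : Real.sign r * |r|⁻¹ = r⁻¹ := by
  rcases hr.lt_or_gt with h | h
  · rw [Real.sign_of_neg h, abs_of_neg h, inv_neg, neg_one_mul, neg_neg]
  · rw [Real.sign_of_pos h, abs_of_pos h, one_mul]

theorem profile_zero_sign_mul {a r : ℝ} (ha : 0 ≤ a) (hr : r ≠ 0) (ε : ℝ) :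
    profile 0 ε (Real.sign r * √a * |r| ^ (-(1 / 2 : ℝ))) = 2 * a / r := by
  have hpow : (|r| ^ (-(1 / 2 : ℝ))) ^ 2 = |r|⁻¹ := by
    rw [← Real.rpow_mul_natCast (abs_nonneg r)]; norm_num [Real.rpow_neg_one]
  rw [profile_zero_left, mul_assoc (Real.sign r), abs_mul, Real.abs_sign_of_ne_zero hr, one_mul,
    abs_of_nonneg (by positivity)]
  calc 2 * (√a * |r| ^ (-(1 / 2 : ℝ))) * (Real.sign r * (√a * |r| ^ (-(1 / 2 : ℝ))))
      = 2 * √a ^ 2 * (Real.sign r * (|r| ^ (-(1 / 2 : ℝ))) ^ 2) := by ring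
    _ = 2 * a / r := by rw [Real.sq_sqrt ha, hpow, Real.sign_mul_abs_inv hr, div_eq_mul_inv]

theorem two_mul_sign_mul_pow_three_div {a B r : ℝ} (ha : 0 ≤ a) (hB : 0 < B) (hr : r ≠ 0) :
    2 * (Real.sign r * a ^ (1 / 3 : ℝ) * B ^ (1 / 3 : ℝ) * |r| ^ (-(1 / 3 : ℝ))) ^ 3 / B =
      2 * a / r := by
  have hcube : ∀ {x : ℝ} (c : ℝ), 0 ≤ x → (x ^ c) ^ 3 = x ^ (c * 3) := fun c hx => by
    rw [← Real.rpow_mul_natCast hx]; norm_num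
  have hsign3 : Real.sign r ^ 3 = Real.sign r := by
    rw [pow_succ', ← sq_abs, Real.abs_sign_of_ne_zero hr, one_pow, mul_one]
  rw [mul_pow, mul_pow, mul_pow, hsign3, hcube _ ha, hcube _ hB.le, hcube _ (abs_nonneg r)]
  norm_num [Real.rpow_neg_one]
  rw [div_eq_mul_inv (2 * a), ← Real.sign_mul_abs_inv hr]
  field_simp

/-- Fix `γ > 0`, `B > 0`, `δ > 0`.  For each sign `ε ∈ {+1, -1}`, each
integer `N ≥ 1` and each `r ≠ 0` there is a unique `x ∈ (-N^δ, N^δ)` with `x·r > 0`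
satisfying `(2√(x² + B²/4) + εB)·x / √(1 - x²·N^(-2δ)) = π·N^(2δ-1)/(γ r)`; denoting it
`x_{N,B,ε}(r)`:
(i) if `δ > 1/2`, `N^(1/2-δ)·x_{N,B,ε}(r) → sign(r)·√(π/(2γ))·|r|^(-1/2)` for both signs;
(ii) if `δ = 1/2`, `x_{N,B,ε}(r) → x_{B,ε}(r)` for both signs;
(iii) if `0 < δ < 1/2`, `N^((1-2δ)/3)·x_{N,B,-}(r) → sign(r)·(π/(2γ))^(1/3)·B^(1/3)·|r|^(-1/3)`. -/
theorem stmt_11 (γ B δ : ℝ) (hγ : 0 < γ) (hB : 0 < B) (hδ : 0 < δ)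
    (xN : ℝ → ℕ → ℝ → ℝ) (xB : ℝ → ℝ → ℝ)
    (hxB : ∀ ε : ℝ, (ε = 1 ∨ ε = -1) → ∀ r : ℝ, r ≠ 0 →
      (2 * Real.sqrt (xB ε r ^ 2 + B ^ 2 / 4) + ε * B) * xB ε r = Real.pi / (γ * r))
    (hxN : ∀ ε : ℝ, (ε = 1 ∨ ε = -1) → ∀ N : ℕ, 1 ≤ N → ∀ r : ℝ, r ≠ 0 →
      xN ε N r ∈ Set.Ioo (-((N : ℝ) ^ δ)) ((N : ℝ) ^ δ) ∧ 0 < xN ε N r * r ∧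
        (2 * Real.sqrt (xN ε N r ^ 2 + B ^ 2 / 4) + ε * B) * xN ε N r /
            Real.sqrt (1 - xN ε N r ^ 2 * (N : ℝ) ^ (-(2 * δ))) =
          Real.pi * (N : ℝ) ^ (2 * δ - 1) / (γ * r)) :
    (∀ ε : ℝ, (ε = 1 ∨ ε = -1) → ∀ N : ℕ, 1 ≤ N → ∀ r : ℝ, r ≠ 0 →
      ∃! x : ℝ, x ∈ Set.Ioo (-((N : ℝ) ^ δ)) ((N : ℝ) ^ δ) ∧ 0 < x * r ∧
        (2 * Real.sqrt (x ^ 2 + B ^ 2 / 4) + ε * B) * x /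
            Real.sqrt (1 - x ^ 2 * (N : ℝ) ^ (-(2 * δ))) =
          Real.pi * (N : ℝ) ^ (2 * δ - 1) / (γ * r)) ∧
    (1 / 2 < δ → ∀ ε : ℝ, (ε = 1 ∨ ε = -1) → ∀ r : ℝ, r ≠ 0 →
      Tendsto (fun N : ℕ => (N : ℝ) ^ (1 / 2 - δ) * xN ε N r) atTop
        (𝓝 (Real.sign r * Real.sqrt (Real.pi / (2 * γ)) * |r| ^ (-(1 / 2 : ℝ))))) ∧
    (δ = 1 / 2 → ∀ ε : ℝ, (ε = 1 ∨ ε = -1) → ∀ r : ℝ, r ≠ 0 →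
      Tendsto (fun N : ℕ => xN ε N r) atTop (𝓝 (xB ε r))) ∧
    (δ < 1 / 2 → ∀ r : ℝ, r ≠ 0 →
      Tendsto (fun N : ℕ => (N : ℝ) ^ ((1 - 2 * δ) / 3) * xN (-1) N r) atTop
        (𝓝 (Real.sign r * (Real.pi / (2 * γ)) ^ ((1 : ℝ) / 3) * B ^ ((1 : ℝ) / 3) *
          |r| ^ (-(1 / 3 : ℝ))))) := by
  have hε : ∀ ε : ℝ, (ε = 1 ∨ ε = -1) → |ε| ≤ 1 := by rintro ε (rfl | rfl) <;> norm_num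
  have hsol : ∀ ε : ℝ, (ε = 1 ∨ ε = -1) → ∀ r : ℝ, r ≠ 0 → ∀ᶠ N : ℕ in atTop,
      xN ε N r ∈ Set.Ioo (-((N : ℝ) ^ δ)) ((N : ℝ) ^ δ) ∧
        relProfile B ε ((N : ℝ) ^ (-(2 * δ))) (xN ε N r) =
          Real.pi / (γ * r) * (N : ℝ) ^ (2 * δ - 1) := fun ε hε₁ r hr => by
    filter_upwards [eventually_ge_atTop 1] with N hN
    obtain ⟨hmem, -, heq⟩ := hxN ε hε₁ N hN r hr
    exact ⟨hmem, heq.trans (by ring)⟩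
  have hpi : 0 ≤ Real.pi / (2 * γ) := by positivity
  refine ⟨fun ε hε₁ N hN r hr => ?_, fun hδ₂ ε hε₁ r hr => ?_, fun hδ₂ ε hε₁ r hr => ?_,
    fun hδ₂ r hr => ?_⟩
  · obtain ⟨hmem, hpos, heq⟩ := hxN ε hε₁ N hN r hr
    exact ⟨xN ε N r, ⟨hmem, hpos, heq⟩, fun y ⟨hy, _, hyeq⟩ => relProfile_injOn_Ioo hB.le
      (hε ε hε₁) (by exact_mod_cast hN) hy hmem (hyeq.trans heq.symm)⟩
  · refine tendsto_rpow_mul_of_relProfile_eq hB.le (hε ε hε₁) (by linarith)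
      (profile_strictMono le_rfl (hε ε hε₁)) ?_ (tendsto_rpow_mul_profile_of_half_lt hδ₂ B ε)
      (hsol ε hε₁ r hr)
    rw [profile_zero_sign_mul hpi hr]
    field_simp
  · subst hδ₂
    simpa using tendsto_rpow_mul_of_relProfile_eq (b := 0) hB.le (hε ε hε₁) (by norm_num)
      (profile_strictMono hB.le (hε ε hε₁)) (hxB ε hε₁ r hr) (fun t => by simp)
      (hsol ε hε₁ r hr)
  · refine tendsto_rpow_mul_of_relProfile_eq hB.le (by norm_num) (by linarith)
      (strictMono_two_mul_pow_three_div hB) ?_ (tendsto_rpow_mul_profile_neg_one hB hδ₂)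
      (hsol (-1) (Or.inr rfl) r hr)
    rw [two_mul_sign_mul_pow_three_div hpi hB hr]
    field_simp
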